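/- For every x ∈ X and every t > 0 one has the identity f_0(x) − f_t(x) = ∫₀ᵗ D⁺_s(x)² / (2 s²) ds, where the integrand coincides for all but countably many s with D⁻_s(x)²/(2s²). -/

import Mathlib

/-!
Setting: `(X, d)` is a complete length metric space, `f : X × X → ℝ` is lower
semicontinuous, bounded from below, and satisfies the reverse triangle inequality
`f(x,z) ≥ f(x,y) + f(y,z)`.  For `t > 0` set `F(t,x;y) := f(x,y) + d(x,y)²/(2t)`,
`f_t(x) := inf_y F(t,x;y)`, and `f_0(x) := f(x,x)`.  `D⁺_t(x)` (resp. `D⁻_t(x)`)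
is the largest (resp. smallest) value of `limsup_n d(x,y_n)` (resp. `liminf_n d(x,y_n)`)
among minimizing sequences `(y_n)` of `F(t,x;·)`.
-/

open Filter Topology Metric MeasureTheory
open scoped ENNReal NNReal

noncomputable section

/-- A metric space is a *length space* if the distance between any two points equals the
infimum of the lengths (total variations) of continuous curves joining them. -/
def IsLengthSpace (X : Type*) [MetricSpace X] : Prop :=
  ∀ x y : X,
    ENNReal.ofReal (dist x y) =
      ⨅ γ : { γ : ℝ → X // ContinuousOn γ (Set.Icc 0 1) ∧ γ 0 = x ∧ γ 1 = y },
        eVariationOn γ.1 (Set.Icc 0 1)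

variable {X : Type*} [MetricSpace X]

/-- `FH f t x y = f(x,y) + d(x,y)² / (2t)`. -/
def FH (f : X × X → ℝ) (t : ℝ) (x y : X) : ℝ :=
  f (x, y) + dist x y ^ 2 / (2 * t)

/-- `ft f t x = inf_y (f(x,y) + d(x,y)²/(2t))` for `t ≠ 0`, and `ft f 0 x = f(x,x)`. -/
def ft (f : X × X → ℝ) (t : ℝ) (x : X) : ℝ :=
  if t = 0 then f (x, x) else ⨅ y : X, FH f t x y

/-- `y : ℕ → X` is a minimizing sequence for `F(t,x;·)`. -/
def MinSeq (f : X × X → ℝ) (t : ℝ) (x : X) (y : ℕ → X) : Prop :=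
  Tendsto (fun n => FH f t x (y n)) atTop (𝓝 (ft f t x))

/-- `D⁺_t(x)`: the largest value of `limsup_n d(x, y_n)` among minimizing sequences. -/
def Dplus (f : X × X → ℝ) (t : ℝ) (x : X) : ℝ :=
  sSup { L : ℝ | ∃ y : ℕ → X, MinSeq f t x y ∧
    Filter.limsup (fun n => dist x (y n)) atTop = L }

/-- `D⁻_t(x)`: the smallest value of `liminf_n d(x, y_n)` among minimizing sequences. -/
def Dminus (f : X × X → ℝ) (t : ℝ) (x : X) : ℝ :=
  sInf { L : ℝ | ∃ y : ℕ → X, MinSeq f t x y ∧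
    Filter.liminf (fun n => dist x (y n)) atTop = L }

/-- Descending slope `|∂⁻ g|(x) = limsup_{y→x} (g(y) - g(x))⁻ / d(x,y)`, valued in `[0,∞]`. -/
def descSlope (g : X → ℝ) (x : X) : ℝ≥0∞ :=
  Filter.limsup (fun y => ENNReal.ofReal ((g x - g y) / dist x y)) (𝓝[≠] x)

/-- The tilt `tilt(f)(x) = limsup_{y→x} (f(x,y))⁻ / d(x,y)`, valued in `[0,∞]`. -/
def tilt (f : X × X → ℝ) (x : X) : ℝ≥0∞ :=
  Filter.limsup (fun y => ENNReal.ofReal ((-f (x, y)) / dist x y)) (𝓝[≠] x)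

/-!
Write `φ(t) = f_t(x)`. Since `F(a,x;y) = F(b,x;y) + (1/(2a) - 1/(2b)) d(x,y)²`, testing `f_b` on
a minimizing sequence for `f_a`, and `f_a` on one for `f_b`, gives for `0 < a < b`
`(1/(2a) - 1/(2b)) D⁺_a(x)² ≤ φ(a) - φ(b) ≤ (1/(2a) - 1/(2b)) D⁻_b(x)²`.
Hence `D⁺_a ≤ D⁻_b ≤ D⁺_b`: `D⁺` is monotone, so it is continuous off a countable set, and at
its continuity points `D⁻ = D⁺` and `φ' = -D⁺²/(2s²)`. The same bounds make `φ` locally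
Lipschitz, so the fundamental theorem of calculus with a countable exceptional set gives
`φ(a) - φ(t) = ∫ₐᵗ D⁺_s²/(2s²) ds`; finally `φ(a) → f(x,x)` as `a → 0⁺` by lower
semicontinuity of `f` at `(x,x)`.
-/

open Set

theorem hasDerivAt_of_slope_mem_uIcc {φ u v : ℝ → ℝ} {s l : ℝ}
    (hslope : ∀ᶠ y in 𝓝[≠] s, slope φ s y ∈ uIcc (u y) (v y))
    (hu : Tendsto u (𝓝[≠] s) (𝓝 l)) (hv : Tendsto v (𝓝[≠] s) (𝓝 l)) :
    HasDerivAt φ l s := by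
  have hmin := hu.min hv
  have hmax := hu.max hv
  rw [min_self] at hmin
  rw [max_self] at hmax
  exact hasDerivAt_iff_tendsto_slope.2 <| tendsto_of_tendsto_of_tendsto_of_le_of_le' hmin hmax
    (hslope.mono fun _ h => h.1) (hslope.mono fun _ h => h.2)

theorem ofReal_sub_eq_setLIntegral_Ioc {F g : ℝ → ℝ} {L t : ℝ} (ht : 0 < t)
    (hF : ∀ a ∈ Ioc 0 t, ENNReal.ofReal (F a - F t) = ∫⁻ s in Ioc a t, ENNReal.ofReal (g s))
    (hlim : Tendsto F (𝓝[>] 0) (𝓝 L)) :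
    ENNReal.ofReal (L - F t) = ∫⁻ s in Ioc 0 t, ENNReal.ofReal (g s) := by
  set a : ℕ → ℝ := fun n => t / (n + 1)
  have ha_mem : ∀ n, a n ∈ Ioc 0 t := fun n =>
    ⟨by positivity, div_le_self ht.le (by simp)⟩
  have ha_lim : Tendsto a atTop (𝓝 0) := by
    simpa [a, div_eq_mul_one_div t] using
      (tendsto_one_div_add_atTop_nhds_zero_nat (𝕜 := ℝ)).const_mul t
  have ha_mono : Monotone fun n => Ioc (a n) t := fun n m hnm =>
    Ioc_subset_Ioc_left <| div_le_div_of_nonneg_left ht.le (by positivity) (by gcongr)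
  have hunion : ⋃ n, Ioc (a n) t = Ioc 0 t := by
    refine (iUnion_subset fun n => Ioc_subset_Ioc_left (ha_mem n).1.le).antisymm fun s hs => ?_
    obtain ⟨n, hn⟩ := (ha_lim.eventually (eventually_lt_nhds hs.1)).exists
    exact mem_iUnion.2 ⟨n, hn, hs.2⟩
  have hmeasure := tendsto_measure_iUnion_atTop
    (μ := volume.withDensity fun s => ENNReal.ofReal (g s)) ha_mono
  rw [hunion, withDensity_apply _ measurableSet_Ioc] at hmeasure
  have ha_lim' : Tendsto a atTop (𝓝[>] 0) :=
    tendsto_nhdsWithin_iff.2 ⟨ha_lim, .of_forall fun n => (ha_mem n).1⟩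
  have hF_lim : Tendsto (fun n => ENNReal.ofReal (F (a n) - F t)) atTop
      (𝓝 (ENNReal.ofReal (L - F t))) :=
    (ENNReal.continuous_ofReal.tendsto _).comp ((hlim.comp ha_lim').sub_const _)
  refine tendsto_nhds_unique hF_lim (hmeasure.congr fun n => ?_)
  rw [Function.comp_apply, withDensity_apply _ measurableSet_Ioc, hF _ (ha_mem n)]

section HopfLax

variable {f : X × X → ℝ} {C a b s t : ℝ} {x : X} {y : ℕ → X}

theorem ft_zero : ft f 0 x = f (x, x) := if_pos rfl

theorem ft_of_pos (ht : 0 < t) : ft f t x = ⨅ y, FH f t x y := if_neg ht.ne'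

theorem le_FH (hC : ∀ p, C ≤ f p) (ht : 0 < t) (y : X) : C ≤ FH f t x y :=
  le_add_of_le_of_nonneg (hC _) (by positivity)

theorem ft_le_FH (hC : ∀ p, C ≤ f p) (ht : 0 < t) (y : X) : ft f t x ≤ FH f t x y := by
  rw [ft_of_pos ht]
  exact ciInf_le ⟨C, forall_mem_range.2 (le_FH hC ht)⟩ y

theorem ft_le_diag (hC : ∀ p, C ≤ f p) (ht : 0 < t) : ft f t x ≤ f (x, x) := by
  simpa [FH] using ft_le_FH (x := x) hC ht x

theorem FH_eq_FH_add (a b : ℝ) (y : X) :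
    FH f a x y = FH f b x y + (1 / (2 * a) - 1 / (2 * b)) * dist x y ^ 2 := by
  unfold FH
  ring

theorem antitoneOn_ft (hC : ∀ p, C ≤ f p) : AntitoneOn (ft f · x) (Ioi 0) := by
  intro a ha b hb hab
  have : Nonempty X := ⟨x⟩
  change ft f b x ≤ ft f a x
  rw [ft_of_pos (x := x) ha]
  refine le_ciInf fun y => (ft_le_FH hC hb y).trans ?_
  unfold FH
  have ha : 0 < a := ha
  gcongr

theorem exists_minSeq (hC : ∀ p, C ≤ f p) (ht : 0 < t) : ∃ y, MinSeq f t x y := by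
  have : Nonempty X := ⟨x⟩
  obtain ⟨u, -, hu, hmem⟩ :=
    exists_seq_tendsto_sInf (range_nonempty (FH f t x)) ⟨C, forall_mem_range.2 (le_FH hC ht)⟩
  choose y hy using hmem
  refine ⟨y, ?_⟩
  rw [MinSeq, ft_of_pos ht]
  simpa only [hy, sInf_range] using hu

theorem dist_le_sqrt_FH (hC : ∀ p, C ≤ f p) (ht : 0 < t) (y : X) :
    dist x y ≤ √(2 * t * (FH f t x y - C)) := by
  refine Real.le_sqrt_of_sq_le ?_
  have h : 2 * t * (dist x y ^ 2 / (2 * t)) = dist x y ^ 2 := by field_simp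
  have := hC (x, y)
  unfold FH
  nlinarith

theorem MinSeq.isBoundedUnder_dist (hC : ∀ p, C ≤ f p) (ht : 0 < t) (hy : MinSeq f t x y) :
    IsBoundedUnder (· ≤ ·) atTop fun n => dist x (y n) :=
  (((hy.sub_const C).const_mul (2 * t)).sqrt).isBoundedUnder_le.mono_le
    (.of_forall fun n => dist_le_sqrt_FH hC ht (y n))

theorem MinSeq.limsup_dist_le (hC : ∀ p, C ≤ f p) (ha : 0 < a) (hab : a < b)
    (hy : MinSeq f a x y) :
    limsup (fun n => dist x (y n)) atTop ≤
      √((ft f a x - ft f b x) / (1 / (2 * a) - 1 / (2 * b))) := by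
  have hc : 0 < 1 / (2 * a) - 1 / (2 * b) := sub_pos.2 (by gcongr)
  have hle : ∀ n, dist x (y n) ≤
      √((FH f a x (y n) - ft f b x) / (1 / (2 * a) - 1 / (2 * b))) := fun n => by
    refine Real.le_sqrt_of_sq_le ((le_div_iff₀ hc).2 ?_)
    linarith [ft_le_FH (x := x) hC (ha.trans hab) (y n), FH_eq_FH_add (f := f) (x := x) a b (y n)]
  have hlim := ((hy.sub_const (ft f b x)).div_const (1 / (2 * a) - 1 / (2 * b))).sqrt
  calc limsup (fun n => dist x (y n)) atTop
      ≤ limsup (fun n => √((FH f a x (y n) - ft f b x) / (1 / (2 * a) - 1 / (2 * b)))) atTop :=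
        limsup_le_limsup (.of_forall hle) (isCoboundedUnder_le_of_le atTop fun _ => dist_nonneg)
          hlim.isBoundedUnder_le
    _ = _ := hlim.limsup_eq

theorem MinSeq.le_liminf_dist (hC : ∀ p, C ≤ f p) (ha : 0 < a) (hab : a < b)
    (hy : MinSeq f b x y) :
    √((ft f a x - ft f b x) / (1 / (2 * a) - 1 / (2 * b))) ≤
      liminf (fun n => dist x (y n)) atTop := by
  have hc : 0 < 1 / (2 * a) - 1 / (2 * b) := sub_pos.2 (by gcongr)
  have hle : ∀ n, √((ft f a x - FH f b x (y n)) / (1 / (2 * a) - 1 / (2 * b))) ≤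
      dist x (y n) := fun n => by
    refine (Real.sqrt_le_left dist_nonneg).2 ((div_le_iff₀ hc).2 ?_)
    linarith [ft_le_FH (x := x) hC ha (y n), FH_eq_FH_add (f := f) (x := x) a b (y n)]
  have hlim := ((hy.const_sub (ft f a x)).div_const (1 / (2 * a) - 1 / (2 * b))).sqrt
  calc _ = liminf (fun n => √((ft f a x - FH f b x (y n)) / (1 / (2 * a) - 1 / (2 * b))))
        atTop := hlim.liminf_eq.symm
    _ ≤ _ := liminf_le_liminf (.of_forall hle) hlim.isBoundedUnder_ge
        (hy.isBoundedUnder_dist hC (ha.trans hab)).isCoboundedUnder_ge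

theorem MinSeq.liminf_dist_nonneg (hC : ∀ p, C ≤ f p) (ht : 0 < t) (hy : MinSeq f t x y) :
    0 ≤ liminf (fun n => dist x (y n)) atTop :=
  le_liminf_of_le (hy.isBoundedUnder_dist hC ht).isCoboundedUnder_ge
    (.of_forall fun _ => dist_nonneg)

theorem Dplus_le_sqrt (hC : ∀ p, C ≤ f p) (ha : 0 < a) (hab : a < b) :
    Dplus f a x ≤ √((ft f a x - ft f b x) / (1 / (2 * a) - 1 / (2 * b))) := by
  obtain ⟨y, hy⟩ := exists_minSeq (x := x) hC ha
  exact csSup_le ⟨_, y, hy, rfl⟩ fun _ ⟨z, hz, hL⟩ => hL ▸ hz.limsup_dist_le hC ha hab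

theorem sqrt_le_Dminus (hC : ∀ p, C ≤ f p) (ha : 0 < a) (hab : a < b) :
    √((ft f a x - ft f b x) / (1 / (2 * a) - 1 / (2 * b))) ≤ Dminus f b x := by
  obtain ⟨y, hy⟩ := exists_minSeq (x := x) hC (ha.trans hab)
  exact le_csInf ⟨_, y, hy, rfl⟩ fun _ ⟨z, hz, hL⟩ => hL ▸ hz.le_liminf_dist hC ha hab

theorem Dplus_le_Dminus (hC : ∀ p, C ≤ f p) (ha : 0 < a) (hab : a < b) :
    Dplus f a x ≤ Dminus f b x :=
  (Dplus_le_sqrt hC ha hab).trans (sqrt_le_Dminus hC ha hab)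

theorem Dminus_nonneg (hC : ∀ p, C ≤ f p) (ht : 0 < t) : 0 ≤ Dminus f t x := by
  obtain ⟨y, hy⟩ := exists_minSeq (x := x) hC ht
  exact le_csInf ⟨_, y, hy, rfl⟩ fun _ ⟨z, hz, hL⟩ => hL ▸ hz.liminf_dist_nonneg hC ht

theorem Dminus_le_Dplus (hC : ∀ p, C ≤ f p) (ht : 0 < t) : Dminus f t x ≤ Dplus f t x := by
  obtain ⟨y, hy⟩ := exists_minSeq (x := x) hC ht
  calc Dminus f t x ≤ liminf (fun n => dist x (y n)) atTop :=
        csInf_le ⟨0, fun _ ⟨z, hz, hL⟩ => hL ▸ hz.liminf_dist_nonneg hC ht⟩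
          ⟨y, hy, rfl⟩
    _ ≤ limsup (fun n => dist x (y n)) atTop :=
        liminf_le_limsup (hy.isBoundedUnder_dist hC ht)
          (isBoundedUnder_of ⟨0, fun _ => dist_nonneg⟩)
    _ ≤ Dplus f t x :=
        le_csSup ⟨_, fun _ ⟨z, hz, hL⟩ => hL ▸ hz.limsup_dist_le hC ht (lt_add_one t)⟩
          ⟨y, hy, rfl⟩

theorem Dplus_nonneg (hC : ∀ p, C ≤ f p) (ht : 0 < t) : 0 ≤ Dplus f t x :=
  (Dminus_nonneg hC ht).trans (Dminus_le_Dplus hC ht)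

theorem monotoneOn_Dplus (hC : ∀ p, C ≤ f p) : MonotoneOn (Dplus f · x) (Ioi 0) := by
  intro a ha b hb hab
  rcases hab.eq_or_lt with rfl | hlt
  · exact le_rfl
  · exact (Dplus_le_Dminus hC ha hlt).trans (Dminus_le_Dplus hC hb)

theorem mul_sq_Dplus_le_ft_sub (hC : ∀ p, C ≤ f p) (ha : 0 < a) (hab : a < b) :
    (1 / (2 * a) - 1 / (2 * b)) * Dplus f a x ^ 2 ≤ ft f a x - ft f b x := by
  have hc : 0 < 1 / (2 * a) - 1 / (2 * b) := sub_pos.2 (by gcongr)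
  have hΔ : 0 ≤ ft f a x - ft f b x :=
    sub_nonneg.2 (antitoneOn_ft hC ha (ha.trans hab) hab.le)
  have := (Real.le_sqrt (Dplus_nonneg hC ha) (div_nonneg hΔ hc.le)).1 (Dplus_le_sqrt hC ha hab)
  rwa [le_div_iff₀ hc, mul_comm] at this

theorem ft_sub_le_mul_sq_Dminus (hC : ∀ p, C ≤ f p) (ha : 0 < a) (hab : a < b) :
    ft f a x - ft f b x ≤ (1 / (2 * a) - 1 / (2 * b)) * Dminus f b x ^ 2 := by
  have hc : 0 < 1 / (2 * a) - 1 / (2 * b) := sub_pos.2 (by gcongr)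
  have := (Real.sqrt_le_left (Dminus_nonneg hC (ha.trans hab))).1
    (sqrt_le_Dminus (x := x) hC ha hab)
  rwa [div_le_iff₀ hc, mul_comm] at this

theorem slope_ft_mem_Icc (hC : ∀ p, C ≤ f p) (ha : 0 < a) (hab : a < b) :
    slope (ft f · x) a b ∈
      Icc (-(Dplus f b x ^ 2 / (2 * a * b))) (-(Dplus f a x ^ 2 / (2 * a * b))) := by
  have hb : 0 < b := ha.trans hab
  have hba : 0 < b - a := sub_pos.2 hab
  have hscale : ∀ D : ℝ, -(D / (2 * a * b)) * (b - a) = -((1 / (2 * a) - 1 / (2 * b)) * D) :=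
    fun D => by field_simp
  have hup : ft f a x - ft f b x ≤ (1 / (2 * a) - 1 / (2 * b)) * Dplus f b x ^ 2 :=
    (ft_sub_le_mul_sq_Dminus hC ha hab).trans <| by
      gcongr
      exacts [sub_nonneg.2 (by gcongr), Dminus_nonneg hC hb, Dminus_le_Dplus hC hb]
  have hlow := mul_sq_Dplus_le_ft_sub (x := x) hC ha hab
  rw [slope_def_field]
  constructor
  · rw [le_div_iff₀ hba, hscale]
    linarith
  · rw [div_le_iff₀ hba, hscale]
    linarith

theorem lipschitzOnWith_ft (hC : ∀ p, C ≤ f p) (ha : 0 < a) :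
    LipschitzOnWith (Dplus f b x ^ 2 / (2 * a ^ 2)).toNNReal (ft f · x) (Icc a b) := by
  refine LipschitzOnWith.of_le_add_mul' _ fun p hp q hq => ?_
  have hp0 : 0 < p := ha.trans_le hp.1
  have hq0 : 0 < q := ha.trans_le hq.1
  have hK : 0 ≤ Dplus f b x ^ 2 / (2 * a ^ 2) := by positivity
  rcases le_or_gt q p with hqp | hpq
  · have := antitoneOn_ft (x := x) hC hq0 hp0 hqp
    have := mul_nonneg hK (dist_nonneg (x := p) (y := q))
    linarith
  · have hslope := (slope_ft_mem_Icc (x := x) hC hp0 hpq).1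
    rw [slope_def_field, le_div_iff₀ (sub_pos.2 hpq)] at hslope
    have hD : Dplus f q x ^ 2 / (2 * p * q) ≤ Dplus f b x ^ 2 / (2 * a ^ 2) := by
      have hDq := monotoneOn_Dplus (x := x) hC hq0 (ha.trans_le (hq.1.trans hq.2)) hq.2
      have hnn := Dplus_nonneg (x := x) hC hq0
      have hden : 2 * a ^ 2 ≤ 2 * p * q := by nlinarith [hp.1, hq.1]
      exact div_le_div₀ (by positivity) (by gcongr) (by positivity) hden
    rw [Real.dist_eq, abs_of_neg (sub_neg.2 hpq)]
    nlinarith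

theorem hasDerivAt_ft (hC : ∀ p, C ≤ f p) (hs : 0 < s) (hD : ContinuousAt (Dplus f · x) s) :
    HasDerivAt (ft f · x) (-(Dplus f s x ^ 2 / (2 * s ^ 2))) s := by
  have hu : ContinuousAt (fun y => -(Dplus f y x ^ 2 / (2 * s * y))) s :=
    ((hD.pow 2).div (continuousAt_const.mul continuousAt_id) (by simp [hs.ne'])).neg
  have hv : ContinuousAt (fun y => -(Dplus f s x ^ 2 / (2 * s * y))) s :=
    (continuousAt_const.div (continuousAt_const.mul continuousAt_id) (by simp [hs.ne'])).neg
  have hss : 2 * s * s = 2 * s ^ 2 := by ring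
  refine hasDerivAt_of_slope_mem_uIcc ?_ (hss ▸ hu.tendsto.mono_left nhdsWithin_le_nhds)
    (hss ▸ hv.tendsto.mono_left nhdsWithin_le_nhds)
  filter_upwards [self_mem_nhdsWithin, nhdsWithin_le_nhds (Ioi_mem_nhds hs)] with y hys hy
  rcases lt_or_gt_of_ne hys with hlt | hgt
  · rw [slope_comm, uIcc_comm]
    have := slope_ft_mem_Icc (x := x) hC hy hlt
    rw [mul_right_comm 2 y s] at this
    exact Icc_subset_uIcc this
  · exact Icc_subset_uIcc (slope_ft_mem_Icc hC hs hgt)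

theorem intervalIntegrable_Dplus_sq_div (hC : ∀ p, C ≤ f p) (ha : 0 < a) (hb : 0 < b) :
    IntervalIntegrable (fun s => Dplus f s x ^ 2 / (2 * s ^ 2)) volume a b := by
  have hpos : ∀ s ∈ uIcc a b, 0 < s := fun s hs => (lt_min ha hb).trans_le hs.1
  have hmono : MonotoneOn (fun s => Dplus f s x ^ 2) (uIcc a b) := fun p hp q hq hpq =>
    pow_le_pow_left₀ (Dplus_nonneg hC (hpos p hp))
      (monotoneOn_Dplus hC (hpos p hp) (hpos q hq) hpq) 2
  have hcont : ContinuousOn (fun s : ℝ => 1 / (2 * s ^ 2)) (uIcc a b) :=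
    continuousOn_const.div (by fun_prop) fun s hs => by have := hpos s hs; positivity
  simpa only [mul_one_div] using hmono.intervalIntegrable.mul_continuousOn hcont

theorem ft_sub_ft_eq_integral (hC : ∀ p, C ≤ f p) (ha : 0 < a) (hab : a ≤ b) :
    ft f a x - ft f b x = ∫ s in a..b, Dplus f s x ^ 2 / (2 * s ^ 2) := by
  have hFTC := integral_eq_of_hasDerivAt_off_countable_of_le (ft f · x)
    (fun s => -(Dplus f s x ^ 2 / (2 * s ^ 2))) hab
    (monotoneOn_Dplus (x := x) hC).countable_not_continuousWithinAt
    (lipschitzOnWith_ft hC ha).continuousOn (fun s ⟨hs, hcont⟩ => ?_)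
    (intervalIntegrable_Dplus_sq_div hC ha (ha.trans_le hab)).neg
  · rw [intervalIntegral.integral_neg] at hFTC
    linarith
  · have hs0 : 0 < s := ha.trans hs.1
    exact hasDerivAt_ft hC hs0
      ((not_not.1 fun h => hcont ⟨hs0, h⟩).continuousAt (Ioi_mem_nhds hs0))

theorem countable_setOf_Dplus_ne_Dminus (hC : ∀ p, C ≤ f p) :
    {s | 0 < s ∧ Dplus f s x ≠ Dminus f s x}.Countable := by
  refine (monotoneOn_Dplus (x := x) hC).countable_not_continuousWithinAt.mono ?_
  rintro s ⟨hs, hne⟩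
  refine ⟨hs, fun hcont => hne (le_antisymm ?_ (Dminus_le_Dplus hC hs))⟩
  have hlim : Tendsto (Dplus f · x) (𝓝[<] s) (𝓝 (Dplus f s x)) :=
    (hcont.continuousAt (Ioi_mem_nhds hs)).tendsto.mono_left nhdsWithin_le_nhds
  refine le_of_tendsto hlim ?_
  filter_upwards [self_mem_nhdsWithin, nhdsWithin_le_nhds (Ioi_mem_nhds hs)] with r hrs hr
  exact Dplus_le_Dminus hC hr hrs

theorem tendsto_ft_nhdsGT_zero (hC : ∀ p, C ≤ f p) (hf : LowerSemicontinuousAt f (x, x)) :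
    Tendsto (ft f · x) (𝓝[>] 0) (𝓝 (f (x, x))) := by
  refine tendsto_order.2 ⟨fun m hm => ?_, fun M hM => ?_⟩
  · obtain ⟨m', hmm', hm'⟩ := exists_between hm
    obtain ⟨r, hr, hball⟩ := Metric.eventually_nhds_iff.1 (hf m' hm')
    have hδ : 0 < r ^ 2 / (2 * (|m' - C| + 1)) := by positivity
    filter_upwards [Ioo_mem_nhdsGT hδ] with s ⟨hs, hsδ⟩
    have : Nonempty X := ⟨x⟩
    refine hmm'.trans_le ?_
    rw [ft_of_pos hs]
    refine le_ciInf fun y => ?_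
    by_cases hy : dist x y < r
    · have hfy := hball (y := (x, y)) (by simpa [Prod.dist_eq, dist_comm] using hy)
      exact hfy.le.trans (le_add_of_nonneg_right (by positivity))
    · rw [not_lt] at hy
      rw [lt_div_iff₀ (by positivity)] at hsδ
      have hr2 : r ^ 2 ≤ dist x y ^ 2 := by gcongr
      have hpen : m' - C ≤ dist x y ^ 2 / (2 * s) := by
        rw [le_div_iff₀ (by positivity)]
        nlinarith [le_abs_self (m' - C)]
      linarith [hC (x, y), show FH f s x y = f (x, y) + dist x y ^ 2 / (2 * s) from rfl]
  · filter_upwards [self_mem_nhdsWithin] with s hs using (ft_le_diag hC hs).trans_lt hM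

end HopfLax

theorem statement5_general
    (f : X × X → ℝ) (hlsc : LowerSemicontinuous f)
    (hbdd : ∃ C : ℝ, ∀ p : X × X, C ≤ f p)
    (x : X) (t : ℝ) (ht : 0 < t) :
    ENNReal.ofReal (ft f 0 x - ft f t x) =
      (∫⁻ s in Set.Ioc (0 : ℝ) t, ENNReal.ofReal (Dplus f s x ^ 2 / (2 * s ^ 2))) ∧
    Set.Countable { s : ℝ | 0 < s ∧ Dplus f s x ≠ Dminus f s x } := by
  obtain ⟨C, hC⟩ := hbdd
  refine ⟨?_, countable_setOf_Dplus_ne_Dminus hC⟩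
  rw [ft_zero]
  refine ofReal_sub_eq_setLIntegral_Ioc ht (fun a ha => ?_) (tendsto_ft_nhdsGT_zero hC (hlsc _))
  rw [ft_sub_ft_eq_integral hC ha.1 ha.2, intervalIntegral.integral_of_le ha.2,
    ofReal_integral_eq_lintegral_ofReal (intervalIntegrable_Dplus_sq_div hC ha.1 ht).1
      (.of_forall fun s => by positivity)]

/-- For every `x ∈ X` and `t > 0`: `f_0(x) - f_t(x) = ∫₀ᵗ D⁺_s(x)²/(2s²) ds`, and the
integrand coincides with `D⁻_s(x)²/(2s²)` for all but countably many `s`. -/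
theorem statement5 [CompleteSpace X] (hX : IsLengthSpace X)
    (f : X × X → ℝ) (hlsc : LowerSemicontinuous f)
    (hbdd : ∃ C : ℝ, ∀ p : X × X, C ≤ f p)
    (hrev : ∀ x y z : X, f (x, y) + f (y, z) ≤ f (x, z))
    (x : X) (t : ℝ) (ht : 0 < t) :
    ENNReal.ofReal (ft f 0 x - ft f t x) =
      (∫⁻ s in Set.Ioc (0 : ℝ) t, ENNReal.ofReal (Dplus f s x ^ 2 / (2 * s ^ 2))) ∧
    Set.Countable { s : ℝ | 0 < s ∧ Dplus f s x ≠ Dminus f s x } :=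
  statement5_general f hlsc hbdd x t ht
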